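/- arXiv:2303.14658 — 3 statements merged into one kernel-verified Lean document; each statement's English description precedes it below -/
import Mathlib

section
/- Let b₋ < 0 < b₊ and let ψ₋ : [0, −b₋) → ℝ and ψ₊ : [0, b₊) → ℝ be functions such that for every λ ∈ [0, −b₋), log ∫ exp(−λ·(ℓ(w,z) − ∫ ℓ d(P_W ⊗ μ))) d(P_W ⊗ μ)(w,z) ≤ ψ₋(λ), and for every λ ∈ [0, b₊), log ∫ exp(λ·(ℓ(w,z) − ∫ ℓ d(P_W ⊗ μ))) d(P_W ⊗ μ)(w,z) ≤ ψ₊(λ). Then gen ≤ (1/n) ∑_{i=1}^n inf_{λ ∈ (0, −b₋)} (I(W;Z_i) + ψ₋(λ))/λ, and −gen ≤ (1/n) ∑_{i=1}^n inf_{λ ∈ (0, b₊)} (I(W;Z_i) + ψ₊(λ))/λ. -/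
/-! For each coordinate `i` and `λ > 0`, the Donsker–Varadhan inequality for `P_i ≪ P_W ⊗ μ`,
applied to `±λ (ℓ - E_{P_W ⊗ μ} ℓ)`, gives `±λ (E_{P_i} ℓ - E_{P_W ⊗ μ} ℓ) ≤ I(W;Z_i) + ψ_±(λ)`.
Since `gen` is the average over `i` of `E_{P_W ⊗ μ} ℓ - E_{P_i} ℓ`, dividing by `λ`, taking the
infimum over `λ` and averaging over `i` gives both bounds. -/

open MeasureTheory Real

/-- Real-valued Kullback–Leibler divergence `D(P‖Q)`,
the integral of the log-likelihood ratio with respect to `P`. -/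
noncomputable def klReal {α : Type*} [MeasurableSpace α] (P Q : Measure α) : ℝ :=
  ∫ x, llr P Q x ∂P

variable {W Z : Type*} [MeasurableSpace W] [MeasurableSpace Z]

/-- Population risk `L(w) = ∫ ℓ(w,z) dμ(z)`. -/
noncomputable def popRisk (μ : Measure Z) (ℓ : W × Z → ℝ) (w : W) : ℝ :=
  ∫ z, ℓ (w, z) ∂μ

/-- Empirical risk `L̂(w,s) = (1/n) ∑ i, ℓ(w, s i)`. -/
noncomputable def empRisk (n : ℕ) (ℓ : W × Z → ℝ) (w : W) (s : Fin n → Z) : ℝ :=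
  (1 / (n : ℝ)) * ∑ i, ℓ (w, s i)

/-- Expected generalization error `gen = E_P[L(W) − L̂(W,S_n)]`. -/
noncomputable def genErr (μ : Measure Z) (n : ℕ) (P : Measure (W × (Fin n → Z)))
    (ℓ : W × Z → ℝ) : ℝ :=
  ∫ p, (popRisk μ ℓ p.1 - empRisk n ℓ p.1 p.2) ∂P

/-- Expected empirical excess risk `R̂ = E_P[L̂(W,S_n) − L̂(w*,S_n)]`. -/
noncomputable def empExcess (n : ℕ) (P : Measure (W × (Fin n → Z)))
    (ℓ : W × Z → ℝ) (wstar : W) : ℝ :=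
  ∫ p, (empRisk n ℓ p.1 p.2 - empRisk n ℓ wstar p.2) ∂P

/-- Expected excess risk `R = ∫ r d(P_W ⊗ μ)` where `r(w,z) = ℓ(w,z) − ℓ(w*,z)`. -/
noncomputable def excessRisk (μ : Measure Z) {n : ℕ} (P : Measure (W × (Fin n → Z)))
    (ℓ : W × Z → ℝ) (wstar : W) : ℝ :=
  ∫ p, (ℓ p - ℓ (wstar, p.2)) ∂((P.map Prod.fst).prod μ)

/-- Joint law `P_i` of `(W, Z_i)`: the pushforward of `P` under `(w,z) ↦ (w, z_i)`. -/
noncomputable def jointLaw {n : ℕ} (P : Measure (W × (Fin n → Z))) (i : Fin n) :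
    Measure (W × Z) :=
  P.map fun p => (p.1, p.2 i)

/-- Mutual information `I(W;Z_i) = D(P_i ‖ P_W ⊗ μ)`. -/
noncomputable def mutInfo (μ : Measure Z) {n : ℕ} (P : Measure (W × (Fin n → Z)))
    (i : Fin n) : ℝ :=
  klReal (jointLaw P i) ((P.map Prod.fst).prod μ)

section DonskerVaradhan

variable {α : Type*} [MeasurableSpace α] {μ ν : Measure α}

lemma klReal_nonneg [IsProbabilityMeasure μ] [IsProbabilityMeasure ν] (hμν : μ ≪ ν)
    (hllr : Integrable (llr μ ν) μ) : 0 ≤ klReal μ ν := by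
  simpa [klReal] using InformationTheory.integral_llr_add_sub_measure_univ_nonneg hμν hllr

/-- Donsker–Varadhan: this is Gibbs' inequality for `μ` against the tilted measure `ν.tilted f`. -/
theorem integral_le_klReal_add_log_integral_exp [IsProbabilityMeasure μ] [SigmaFinite ν]
    {f : α → ℝ} (hμν : μ ≪ ν) (hllr : Integrable (llr μ ν) μ) (hfμ : Integrable f μ)
    (hfν : Integrable (fun x => exp (f x)) ν) :
    ∫ x, f x ∂μ ≤ klReal μ ν + log (∫ x, exp (f x) ∂ν) := by
  have : NeZero ν := ⟨fun hν => IsProbabilityMeasure.ne_zero μ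
    (Measure.absolutelyContinuous_zero_iff.1 (hν ▸ hμν))⟩
  have := isProbabilityMeasure_tilted hfν
  have hgibbs := klReal_nonneg (hμν.trans (absolutelyContinuous_tilted hfν))
    (integrable_llr_tilted_right hμν hfμ hllr hfν)
  rw [klReal, integral_llr_tilted_right hμν hfμ hfν hllr] at hgibbs
  rw [klReal]
  linarith

theorem mul_integral_sub_le_klReal_add_log_integral_exp [IsProbabilityMeasure μ]
    [SigmaFinite ν] {g : α → ℝ} (hμν : μ ≪ ν) (hllr : Integrable (llr μ ν) μ)
    (hg : Integrable g μ) (t c : ℝ) (hexp : Integrable (fun x => exp (t * (g x - c))) ν) :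
    t * (∫ x, g x ∂μ - c) ≤ klReal μ ν + log (∫ x, exp (t * (g x - c)) ∂ν) := by
  have h := integral_le_klReal_add_log_integral_exp (f := fun x => t * (g x - c)) hμν hllr
    ((hg.sub (integrable_const c)).const_mul t) hexp
  rwa [integral_const_mul, integral_sub hg (integrable_const c), integral_const, probReal_univ,
    smul_eq_mul, one_mul] at h

end DonskerVaradhan

lemma le_iInf_div_of_forall_mul_le {x b : ℝ} {φ : ℝ → ℝ} (hb : 0 < b)
    (h : ∀ lam ∈ Set.Ioo 0 b, lam * x ≤ φ lam) :
    x ≤ ⨅ lam : Set.Ioo (0 : ℝ) b, φ lam.1 / lam.1 := by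
  have : Nonempty (Set.Ioo (0 : ℝ) b) := (Set.nonempty_Ioo.2 hb).to_subtype
  exact le_ciInf fun lam => (le_div_iff₀ lam.2.1).2 (mul_comm x lam.1 ▸ h lam.1 lam.2)

section Risk

variable {μ : Measure Z} {n : ℕ} {P : Measure (W × (Fin n → Z))} {ℓ : W × Z → ℝ}

lemma integrable_coord_of_integrable_jointLaw {i : Fin n} (hint : Integrable ℓ (jointLaw P i)) :
    Integrable (fun p : W × (Fin n → Z) => ℓ (p.1, p.2 i)) P :=
  hint.comp_measurable (by fun_prop)

lemma integral_coord_eq_integral_jointLaw {i : Fin n} (hint : Integrable ℓ (jointLaw P i)) :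
    ∫ p, ℓ (p.1, p.2 i) ∂P = ∫ q, ℓ q ∂(jointLaw P i) :=
  (integral_map (by fun_prop) hint.aestronglyMeasurable).symm

lemma integral_popRisk_fst [SFinite μ] [IsFiniteMeasure P]
    (hint : Integrable ℓ ((P.map Prod.fst).prod μ)) :
    ∫ p, popRisk μ ℓ p.1 ∂P = ∫ q, ℓ q ∂((P.map Prod.fst).prod μ) := by
  rw [integral_prod _ hint,
    integral_map measurable_fst.aemeasurable hint.integral_prod_left.aestronglyMeasurable]
  rfl

lemma integral_empRisk (hinti : ∀ i, Integrable ℓ (jointLaw P i)) :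
    ∫ p, empRisk n ℓ p.1 p.2 ∂P = 1 / (n : ℝ) * ∑ i, ∫ q, ℓ q ∂(jointLaw P i) := by
  simp only [empRisk]
  rw [integral_const_mul,
    integral_finsetSum _ fun i _ => integrable_coord_of_integrable_jointLaw (hinti i)]
  simp only [integral_coord_eq_integral_jointLaw (hinti _)]

theorem genErr_eq_average [SFinite μ] [IsFiniteMeasure P] (hn : 0 < n)
    (hint : Integrable ℓ ((P.map Prod.fst).prod μ)) (hinti : ∀ i, Integrable ℓ (jointLaw P i)) :
    genErr μ n P ℓ = 1 / (n : ℝ) * ∑ i,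
      (∫ q, ℓ q ∂((P.map Prod.fst).prod μ) - ∫ q, ℓ q ∂(jointLaw P i)) := by
  have hpop : Integrable (fun p : W × (Fin n → Z) => popRisk μ ℓ p.1) P :=
    hint.integral_prod_left.comp_measurable measurable_fst
  have hemp : Integrable (fun p : W × (Fin n → Z) => empRisk n ℓ p.1 p.2) P :=
    (integrable_finsetSum _ fun i _ =>
      integrable_coord_of_integrable_jointLaw (hinti i)).const_mul _
  rw [genErr, integral_sub hpop hemp, integral_popRisk_fst hint, integral_empRisk hinti,
    Finset.sum_sub_distrib, Finset.sum_const, Finset.card_fin, nsmul_eq_mul]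
  field_simp

end Risk

theorem individual_MI_bound_CGF_general
    (μ : Measure Z) [IsProbabilityMeasure μ] (n : ℕ) (hn : 0 < n)
    (P : Measure (W × (Fin n → Z))) [IsProbabilityMeasure P]
    (ℓ : W × Z → ℝ)
    (hint : Integrable ℓ ((P.map Prod.fst).prod μ))
    (hinti : ∀ i : Fin n, Integrable ℓ (jointLaw P i))
    (hac : ∀ i : Fin n, jointLaw P i ≪ (P.map Prod.fst).prod μ)
    (hIfin : ∀ i : Fin n, Integrable (llr (jointLaw P i) ((P.map Prod.fst).prod μ))
      (jointLaw P i))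
    (bm bp : ℝ) (hbm : bm < 0) (hbp : 0 < bp)
    (ψm ψp : ℝ → ℝ)
    (hψmInt : ∀ lam ∈ Set.Ico (0 : ℝ) (-bm),
      Integrable
        (fun p => Real.exp (-lam * (ℓ p - ∫ q, ℓ q ∂((P.map Prod.fst).prod μ))))
        ((P.map Prod.fst).prod μ))
    (hψm : ∀ lam ∈ Set.Ico (0 : ℝ) (-bm),
      Real.log (∫ p, Real.exp (-lam * (ℓ p - ∫ q, ℓ q ∂((P.map Prod.fst).prod μ)))
          ∂((P.map Prod.fst).prod μ)) ≤ ψm lam)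
    (hψpInt : ∀ lam ∈ Set.Ico (0 : ℝ) bp,
      Integrable
        (fun p => Real.exp (lam * (ℓ p - ∫ q, ℓ q ∂((P.map Prod.fst).prod μ))))
        ((P.map Prod.fst).prod μ))
    (hψp : ∀ lam ∈ Set.Ico (0 : ℝ) bp,
      Real.log (∫ p, Real.exp (lam * (ℓ p - ∫ q, ℓ q ∂((P.map Prod.fst).prod μ)))
          ∂((P.map Prod.fst).prod μ)) ≤ ψp lam) :
    genErr μ n P ℓ ≤
      (1 / (n : ℝ)) * ∑ i : Fin n,
        ⨅ lam : Set.Ioo (0 : ℝ) (-bm), (mutInfo μ P i + ψm lam.1) / lam.1 ∧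
    -(genErr μ n P ℓ) ≤
      (1 / (n : ℝ)) * ∑ i : Fin n,
        ⨅ lam : Set.Ioo (0 : ℝ) bp, (mutInfo μ P i + ψp lam.1) / lam.1 := by
  have : IsProbabilityMeasure (P.map Prod.fst) := Measure.isProbabilityMeasure_map (by fun_prop)
  have (i : Fin n) : IsProbabilityMeasure (jointLaw P i) :=
    Measure.isProbabilityMeasure_map (by fun_prop)
  set A := ∫ q, ℓ q ∂((P.map Prod.fst).prod μ)
  have hdv (i : Fin n) (t : ℝ) (hexp : Integrable (fun p => exp (t * (ℓ p - A)))
      ((P.map Prod.fst).prod μ)) :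
      t * (∫ q, ℓ q ∂(jointLaw P i) - A) ≤
        mutInfo μ P i + log (∫ p, exp (t * (ℓ p - A)) ∂((P.map Prod.fst).prod μ)) :=
    mul_integral_sub_le_klReal_add_log_integral_exp (hac i) (hIfin i) (hinti i) t A hexp
  rw [genErr_eq_average hn hint hinti, ← mul_neg, ← Finset.sum_neg_distrib]
  constructor
  · gcongr with i
    refine le_iInf_div_of_forall_mul_le (φ := fun lam => mutInfo μ P i + ψm lam)
      (neg_pos.2 hbm) fun lam hlam => ?_
    have hlam' := Set.Ioo_subset_Ico_self hlam
    linarith [hdv i (-lam) (hψmInt lam hlam'), hψm lam hlam']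
  · gcongr with i
    refine le_iInf_div_of_forall_mul_le (φ := fun lam => mutInfo μ P i + ψp lam) hbp
      fun lam hlam => ?_
    have hlam' := Set.Ioo_subset_Ico_self hlam
    linarith [hdv i lam (hψpInt lam hlam'), hψp lam hlam']

theorem individual_MI_bound_CGF
    (μ : Measure Z) [IsProbabilityMeasure μ] (n : ℕ) (hn : 0 < n)
    (P : Measure (W × (Fin n → Z))) [IsProbabilityMeasure P]
    (hmarg : P.map Prod.snd = Measure.pi fun _ : Fin n => μ)
    (ℓ : W × Z → ℝ) (hℓ : Measurable ℓ) (wstar : W)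
    (hint : Integrable ℓ ((P.map Prod.fst).prod μ))
    (hinti : ∀ i : Fin n, Integrable ℓ (jointLaw P i))
    (hintw : Integrable (fun z => ℓ (wstar, z)) μ)
    (hac : ∀ i : Fin n, jointLaw P i ≪ (P.map Prod.fst).prod μ)
    (hIfin : ∀ i : Fin n, Integrable (llr (jointLaw P i) ((P.map Prod.fst).prod μ))
      (jointLaw P i))
    (bm bp : ℝ) (hbm : bm < 0) (hbp : 0 < bp)
    (ψm ψp : ℝ → ℝ)
    (hψmInt : ∀ lam ∈ Set.Ico (0 : ℝ) (-bm),
      Integrable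
        (fun p => Real.exp (-lam * (ℓ p - ∫ q, ℓ q ∂((P.map Prod.fst).prod μ))))
        ((P.map Prod.fst).prod μ))
    (hψm : ∀ lam ∈ Set.Ico (0 : ℝ) (-bm),
      Real.log (∫ p, Real.exp (-lam * (ℓ p - ∫ q, ℓ q ∂((P.map Prod.fst).prod μ)))
          ∂((P.map Prod.fst).prod μ)) ≤ ψm lam)
    (hψpInt : ∀ lam ∈ Set.Ico (0 : ℝ) bp,
      Integrable
        (fun p => Real.exp (lam * (ℓ p - ∫ q, ℓ q ∂((P.map Prod.fst).prod μ))))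
        ((P.map Prod.fst).prod μ))
    (hψp : ∀ lam ∈ Set.Ico (0 : ℝ) bp,
      Real.log (∫ p, Real.exp (lam * (ℓ p - ∫ q, ℓ q ∂((P.map Prod.fst).prod μ)))
          ∂((P.map Prod.fst).prod μ)) ≤ ψp lam) :
    genErr μ n P ℓ ≤
      (1 / (n : ℝ)) * ∑ i : Fin n,
        ⨅ lam : Set.Ioo (0 : ℝ) (-bm), (mutInfo μ P i + ψm lam.1) / lam.1 ∧
    -(genErr μ n P ℓ) ≤
      (1 / (n : ℝ)) * ∑ i : Fin n,
        ⨅ lam : Set.Ioo (0 : ℝ) bp, (mutInfo μ P i + ψp lam.1) / lam.1 :=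
  individual_MI_bound_CGF_general μ n hn P ℓ hint hinti hac hIfin bm bp hbm hbp ψm ψp hψmInt hψm
    hψpInt hψp
end

section
/- Let (Ω, Q) be a probability space and let X : Ω → ℝ be square-integrable with 0 < E_Q[X], X ≥ −b Q-almost surely for some b > 0, and suppose the Bernstein condition with exponent β = 1 holds: E_Q[X²] ≤ B·E_Q[X] for some B ≥ 1. Then X satisfies the (η, 1/2)-central condition for every η with 0 < η ≤ min(1/b, 1/(2B(e−2))): log E_Q[exp(−ηX)] ≤ −(1/2)·η·E_Q[X]. -/
/-!
For `u ≤ 1`, `exp u ≤ 1 + u + (e - 2) u²`: on `[0, 1]` compare the tails `∑ u^(n+2)/(n+2)!`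
and `∑ 1/(n+2)!` termwise; for `u ≤ 0` already `exp u ≤ 1 + u + u²/2` and `e - 2 ≥ 1/2`.
Applied to `u = -ηX ≤ ηb ≤ 1` this gives `E[exp(-ηX)] ≤ 1 - η E[X] + (e - 2) η² E[X²]`.
The Bernstein condition and `2B(e - 2)η ≤ 1` bound the last term by `η E[X] / 2`, and
`1 + t ≤ exp t` finishes.
-/

open MeasureTheory Real

namespace Real

theorem exp_sub_one_sub_eq_tsum (u : ℝ) :
    exp u - 1 - u = ∑' n : ℕ, u ^ (n + 2) / (n + 2).factorial := by
  have hs := summable_pow_div_factorial u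
  have hexp : exp u = ∑' n : ℕ, u ^ n / n.factorial := by
    rw [exp_eq_exp_ℝ, NormedSpace.exp_eq_tsum_div]
  rw [hexp, hs.tsum_eq_zero_add,
    ((summable_nat_add_iff 1).2 hs).tsum_eq_zero_add]
  simp [Nat.factorial]

theorem exp_le_one_add_add_sq_div_two_of_nonpos {u : ℝ} (hu : u ≤ 0) :
    exp u ≤ 1 + u + u ^ 2 / 2 := by
  have hneg : 1 - u + u ^ 2 / 2 ≤ exp (-u) := by
    simpa [sub_eq_add_neg] using quadratic_le_exp_of_nonneg (neg_nonneg.2 hu)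
  have hpos : 0 < 1 - u + u ^ 2 / 2 := by nlinarith
  -- `(1 + u + u²/2)(1 - u + u²/2) = 1 + u⁴/4 ≥ 1 = exp u * exp (-u)`
  have hprod : exp u * (1 - u + u ^ 2 / 2) ≤ (1 + u + u ^ 2 / 2) * (1 - u + u ^ 2 / 2) :=
    calc exp u * (1 - u + u ^ 2 / 2) ≤ exp u * exp (-u) := by gcongr
      _ = 1 := by rw [← exp_add, add_neg_cancel, exp_zero]
      _ ≤ _ := by nlinarith [pow_nonneg (sq_nonneg u) 2]
  exact le_of_mul_le_mul_right hprod hpos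

theorem exp_le_one_add_add_mul_sq_of_nonneg {u : ℝ} (h0 : 0 ≤ u) (h1 : u ≤ 1) :
    exp u ≤ 1 + u + (exp 1 - 2) * u ^ 2 := by
  have he : exp 1 - 2 = ∑' n : ℕ, (1 : ℝ) ^ (n + 2) / (n + 2).factorial := by
    rw [← exp_sub_one_sub_eq_tsum]; ring
  have hsum (v : ℝ) : Summable fun n : ℕ ↦ v ^ (n + 2) / (n + 2).factorial :=
    (summable_nat_add_iff 2).2 (summable_pow_div_factorial v)
  suffices exp u - 1 - u ≤ (exp 1 - 2) * u ^ 2 by linarith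
  rw [exp_sub_one_sub_eq_tsum, he, mul_comm, ← tsum_mul_left]
  refine (hsum u).tsum_le_tsum (fun n ↦ ?_) ((hsum 1).mul_left _)
  calc u ^ (n + 2) / (n + 2).factorial = u ^ 2 * u ^ n / (n + 2).factorial := by ring
    _ ≤ u ^ 2 * 1 / (n + 2).factorial := by gcongr; exact pow_le_one₀ h0 h1
    _ = u ^ 2 * (1 ^ (n + 2) / (n + 2).factorial) := by ring

theorem exp_le_one_add_add_mul_sq {u : ℝ} (hu : u ≤ 1) :
    exp u ≤ 1 + u + (exp 1 - 2) * u ^ 2 := by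
  rcases le_total u 0 with hneg | hpos
  · have he : 1 / 2 ≤ exp 1 - 2 := by linarith [quadratic_le_exp_of_nonneg zero_le_one]
    calc exp u ≤ 1 + u + u ^ 2 / 2 := exp_le_one_add_add_sq_div_two_of_nonpos hneg
      _ ≤ 1 + u + (exp 1 - 2) * u ^ 2 := by nlinarith [sq_nonneg u]
  · exact exp_le_one_add_add_mul_sq_of_nonneg hpos hu

end Real

theorem mul_le_one_of_le_one_div {a b : ℝ} (ha : 0 ≤ a) (h : a ≤ 1 / b) : a * b ≤ 1 := by
  rcases le_or_gt b 0 with hb | hb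
  · nlinarith
  · exact (le_div_iff₀ hb).1 h

section ExpMoment

variable {Ω : Type*} [MeasurableSpace Ω] {μ : Measure Ω} {Y : Ω → ℝ}

theorem exp_le_one_add_add_mul_sq_ae (hY1 : ∀ᵐ ω ∂μ, Y ω ≤ 1) :
    ∀ᵐ ω ∂μ, exp (Y ω) ≤ 1 + Y ω + (exp 1 - 2) * Y ω ^ 2 := by
  filter_upwards [hY1] with ω hω using exp_le_one_add_add_mul_sq hω

theorem integrable_one_add_add_mul_sq [IsFiniteMeasure μ] (hY : MemLp Y 2 μ) (c : ℝ) :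
    Integrable (fun ω ↦ 1 + Y ω + c * Y ω ^ 2) μ :=
  ((integrable_const 1).add (hY.integrable one_le_two)).add (hY.integrable_sq.const_mul c)

theorem integrable_exp_of_memLp_two_of_le_one [IsFiniteMeasure μ] (hY : MemLp Y 2 μ)
    (hY1 : ∀ᵐ ω ∂μ, Y ω ≤ 1) : Integrable (fun ω ↦ exp (Y ω)) μ := by
  refine (integrable_one_add_add_mul_sq hY (exp 1 - 2)).mono'
    (measurable_exp.comp_aemeasurable hY.aestronglyMeasurable.aemeasurable).aestronglyMeasurable ?_
  filter_upwards [exp_le_one_add_add_mul_sq_ae hY1] with ω hω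
  rwa [norm_of_nonneg (exp_pos _).le]

theorem integral_exp_le_of_memLp_two_of_le_one [IsProbabilityMeasure μ] (hY : MemLp Y 2 μ)
    (hY1 : ∀ᵐ ω ∂μ, Y ω ≤ 1) :
    ∫ ω, exp (Y ω) ∂μ ≤ 1 + ∫ ω, Y ω ∂μ + (exp 1 - 2) * ∫ ω, Y ω ^ 2 ∂μ := by
  calc ∫ ω, exp (Y ω) ∂μ ≤ ∫ ω, 1 + Y ω + (exp 1 - 2) * Y ω ^ 2 ∂μ :=
        integral_mono_of_nonneg (.of_forall fun ω ↦ (exp_pos _).le)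
          (integrable_one_add_add_mul_sq hY _) (exp_le_one_add_add_mul_sq_ae hY1)
    _ = 1 + ∫ ω, Y ω ∂μ + (exp 1 - 2) * ∫ ω, Y ω ^ 2 ∂μ := by
        have hI : Integrable Y μ := hY.integrable one_le_two
        rw [integral_add (f := fun ω ↦ 1 + Y ω) ((integrable_const 1).add hI)
          (hY.integrable_sq.const_mul _), integral_add (integrable_const 1) hI,
          integral_const_mul]
        simp

end ExpMoment

theorem bernstein_implies_central_general
    {Ω : Type*} [MeasurableSpace Ω] (Q : Measure Ω) [IsProbabilityMeasure Q]
    (X : Ω → ℝ) (hX2 : MemLp X 2 Q)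
    (hEX : 0 < ∫ ω, X ω ∂Q)
    (b : ℝ) (hXb : ∀ᵐ ω ∂Q, -b ≤ X ω)
    (B : ℝ)
    (hBern : ∫ ω, (X ω) ^ 2 ∂Q ≤ B * ∫ ω, X ω ∂Q) :
    ∀ η : ℝ, 0 < η → η ≤ min (1 / b) (1 / (2 * B * (Real.exp 1 - 2))) →
      Real.log (∫ ω, Real.exp (-η * X ω) ∂Q) ≤ -(1 / 2) * η * ∫ ω, X ω ∂Q := by
  intro η hη hη_le
  have hηb : η * b ≤ 1 := mul_le_one_of_le_one_div hη.le (le_min_iff.1 hη_le).1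
  have hηB : η * (2 * B * (exp 1 - 2)) ≤ 1 :=
    mul_le_one_of_le_one_div hη.le (le_min_iff.1 hη_le).2
  have hY : MemLp (fun ω ↦ -η * X ω) 2 Q := hX2.const_mul (-η)
  have hY1 : ∀ᵐ ω ∂Q, -η * X ω ≤ 1 := by
    filter_upwards [hXb] with ω hω
    nlinarith
  have hmoment := integral_exp_le_of_memLp_two_of_le_one hY hY1
  simp only [mul_pow, neg_sq, integral_const_mul] at hmoment
  have he : 0 ≤ exp 1 - 2 := by linarith [add_one_le_exp 1]
  have hquad : (exp 1 - 2) * (η ^ 2 * ∫ ω, X ω ^ 2 ∂Q) ≤ 1 / 2 * η * ∫ ω, X ω ∂Q := by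
    nlinarith [mul_le_mul_of_nonneg_left hBern (mul_nonneg he (sq_nonneg η)),
      mul_le_mul_of_nonneg_right hηB (mul_nonneg hη.le hEX.le)]
  have hpos := integral_exp_pos (integrable_exp_of_memLp_two_of_le_one hY hY1)
  rw [log_le_iff_le_exp hpos]
  linarith [add_one_le_exp (-(1 / 2) * η * ∫ ω, X ω ∂Q)]

/-- **Bernstein condition implies the `(η, 1/2)`-central condition.**
If `X` is square-integrable, bounded below by `-b` almost surely, has positive mean,
and satisfies the Bernstein condition `E[X²] ≤ B·E[X]` (exponent `β = 1`), then for every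
`0 < η ≤ min (1/b) (1/(2B(e−2)))` we have `log E[exp(−ηX)] ≤ −(1/2)·η·E[X]`. -/
theorem bernstein_implies_central
    {Ω : Type*} [MeasurableSpace Ω] (Q : Measure Ω) [IsProbabilityMeasure Q]
    (X : Ω → ℝ) (hX2 : MemLp X 2 Q)
    (hEX : 0 < ∫ ω, X ω ∂Q)
    (b : ℝ) (hb : 0 < b) (hXb : ∀ᵐ ω ∂Q, -b ≤ X ω)
    (B : ℝ) (hB : 1 ≤ B)
    (hBern : ∫ ω, (X ω) ^ 2 ∂Q ≤ B * ∫ ω, X ω ∂Q) :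
    ∀ η : ℝ, 0 < η → η ≤ min (1 / b) (1 / (2 * B * (Real.exp 1 - 2))) →
      Real.log (∫ ω, Real.exp (-η * X ω) ∂Q) ≤ -(1 / 2) * η * ∫ ω, X ω ∂Q :=
  bernstein_implies_central_general Q X hX2 hEX b hXb B hBern
end

section
/- Let g : 𝒲 → ℝ be a measurable regularizer, let λ₀ ≥ 0 be a regularization coefficient, and suppose |g(w₁) − g(w₂)| ≤ B for all w₁, w₂ ∈ 𝒲 for some B > 0. Suppose the excess loss r satisfies the (η,c)-central condition under P_W ⊗ μ for some η > 0 and 0 < c ≤ 1, i.e. 0 < R and log ∫ exp(−η·r) d(P_W ⊗ μ) ≤ −c·η·R. Define the regularized empirical excess risk R̂_reg(w,s) := L̂(w,s) − L̂(w*,s) + (λ₀/n)·(g(w) − g(w*)). Then the expected excess risk satisfies R ≤ (1/c)·E_P[R̂_reg(W,S_n)] + λ₀B/(c·n) + (1/(c·η·n)) ∑_{i=1}^n I(W;Z_i). -/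
/-! For each coordinate `i`, the Donsker–Varadhan inequality for `P_i ≪ P_W ⊗ μ` and `f = -η r`,
combined with the central condition, gives `c η R ≤ η E_{P_i}[r] + I(W;Z_i)`. Averaging
over `i` turns `E_{P_i}[r]` into the empirical excess risk, and adding the regularizer
costs at most `λ₀ B / n` because its increments are bounded by `B`. -/

open MeasureTheory Real

variable {W Z : Type*} [MeasurableSpace W] [MeasurableSpace Z]

/-- Donsker–Varadhan: Gibbs' inequality for `ρ` against the tilted measure `ν.tilted f`. -/
lemma integral_le_log_integral_exp_add_integral_llr {α : Type*} [MeasurableSpace α]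
    {ρ ν : Measure α} [IsProbabilityMeasure ρ] [SigmaFinite ν] (hρν : ρ ≪ ν) {f : α → ℝ}
    (hfρ : Integrable f ρ) (hfν : Integrable (fun x => exp (f x)) ν)
    (hllr : Integrable (llr ρ ν) ρ) :
    ∫ x, f x ∂ρ ≤ log (∫ x, exp (f x) ∂ν) + ∫ x, llr ρ ν x ∂ρ := by
  have : NeZero ν :=
    ⟨by rintro rfl; exact NeZero.ne ρ (Measure.absolutelyContinuous_zero_iff.mp hρν)⟩
  have := isProbabilityMeasure_tilted hfν
  have hgibbs := InformationTheory.integral_llr_add_sub_measure_univ_nonneg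
    (hρν.trans (absolutelyContinuous_tilted hfν)) (integrable_llr_tilted_right hρν hfρ hllr hfν)
  rw [integral_llr_tilted_right hρν hfρ hfν hllr] at hgibbs
  simp only [probReal_univ] at hgibbs
  linarith

lemma mul_integral_le_of_log_integral_exp_le {α : Type*} [MeasurableSpace α]
    {ρ ν : Measure α} [IsProbabilityMeasure ρ] [SigmaFinite ν] (hρν : ρ ≪ ν)
    (hllr : Integrable (llr ρ ν) ρ) {r : α → ℝ} {η c : ℝ} (hr : Integrable r ρ)
    (hexp : Integrable (fun x => exp (-η * r x)) ν)
    (hcentral : log (∫ x, exp (-η * r x) ∂ν) ≤ -c * η * ∫ x, r x ∂ν) :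
    c * η * ∫ x, r x ∂ν ≤ η * ∫ x, r x ∂ρ + ∫ x, llr ρ ν x ∂ρ := by
  have hdv := integral_le_log_integral_exp_add_integral_llr hρν (hr.const_mul (-η)) hexp hllr
  rw [integral_const_mul] at hdv
  linarith

lemma integral_le_integral_add_mul_add_of_abs_le {α : Type*} [MeasurableSpace α] {ν : Measure α}
    [IsProbabilityMeasure ν] {F h : α → ℝ} {a B : ℝ} (hF : Integrable F ν)
    (hh : AEStronglyMeasurable h ν) (hhB : ∀ x, |h x| ≤ B) (ha : 0 ≤ a) :
    ∫ x, F x ∂ν ≤ ∫ x, (F x + a * h x) ∂ν + a * B := by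
  have hhint : Integrable h ν := (integrable_const B).mono' hh (ae_of_all _ hhB)
  have hlower : -B ≤ ∫ x, h x ∂ν := by
    simpa using integral_mono (integrable_const (-B)) hhint fun x => (abs_le.mp (hhB x)).1
  rw [integral_add hF (hhint.const_mul a), integral_const_mul]
  nlinarith

def excessLoss (ℓ : W × Z → ℝ) (wstar : W) (p : W × Z) : ℝ :=
  ℓ p - ℓ (wstar, p.2)

lemma empRisk_sub_empRisk {V Y : Type*} {n : ℕ} (ℓ : V × Y → ℝ) (w w' : V) (s : Fin n → Y) :
    empRisk n ℓ w s - empRisk n ℓ w' s = (1 / (n : ℝ)) * ∑ i, excessLoss ℓ w' (w, s i) := by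
  rw [empRisk, empRisk, ← mul_sub, ← Finset.sum_sub_distrib]
  rfl

section

variable {μ : Measure Z} {n : ℕ} {P : Measure (W × (Fin n → Z))} {ℓ : W × Z → ℝ} {wstar : W}

instance [IsProbabilityMeasure P] (i : Fin n) : IsProbabilityMeasure (jointLaw P i) :=
  Measure.isProbabilityMeasure_map (by fun_prop)

lemma map_snd_jointLaw [IsProbabilityMeasure μ]
    (hmarg : P.map Prod.snd = Measure.pi fun _ : Fin n => μ) (i : Fin n) :
    (jointLaw P i).map Prod.snd = μ := by
  rw [jointLaw, Measure.map_map measurable_snd (by fun_prop)]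
  change P.map ((fun s : Fin n → Z => s i) ∘ Prod.snd) = μ
  rw [← Measure.map_map (measurable_pi_apply i) measurable_snd, hmarg,
    (measurePreserving_eval _ i).map_eq]

lemma integral_jointLaw {f : W × Z → ℝ} (hf : Measurable f) (i : Fin n) :
    ∫ x, f x ∂(jointLaw P i) = ∫ p, f (p.1, p.2 i) ∂P :=
  integral_map (by fun_prop) hf.aestronglyMeasurable

lemma integrable_excessLoss_jointLaw [IsProbabilityMeasure μ]
    (hmarg : P.map Prod.snd = Measure.pi fun _ : Fin n => μ)
    {i : Fin n} (hinti : Integrable ℓ (jointLaw P i))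
    (hintw : Integrable (fun z => ℓ (wstar, z)) μ) :
    Integrable (excessLoss ℓ wstar) (jointLaw P i) := by
  rw [← map_snd_jointLaw hmarg i] at hintw
  exact hinti.sub (hintw.comp_measurable measurable_snd)

lemma integrable_empRisk_sub_empRisk
    (hr : ∀ i, Integrable (excessLoss ℓ wstar) (jointLaw P i)) :
    Integrable (fun p : W × (Fin n → Z) => empRisk n ℓ p.1 p.2 - empRisk n ℓ wstar p.2) P := by
  simp_rw [empRisk_sub_empRisk]
  exact (integrable_finsetSum _ fun i _ => (hr i).comp_measurable (by fun_prop)).const_mul _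

lemma empExcess_eq_average_integral_jointLaw (hℓ : Measurable ℓ)
    (hr : ∀ i, Integrable (excessLoss ℓ wstar) (jointLaw P i)) :
    empExcess n P ℓ wstar = (1 / (n : ℝ)) * ∑ i, ∫ x, excessLoss ℓ wstar x ∂(jointLaw P i) := by
  have hrm : Measurable (excessLoss ℓ wstar) := hℓ.sub (by fun_prop)
  simp_rw [empExcess, empRisk_sub_empRisk, integral_jointLaw hrm]
  rw [integral_const_mul, integral_finsetSum]
  exact fun i _ => (hr i).comp_measurable (by fun_prop)

lemma mul_excessRisk_le_empExcess_add_average_mutInfo [IsProbabilityMeasure μ]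
    [IsProbabilityMeasure P] (hn : 0 < n)
    (hmarg : P.map Prod.snd = Measure.pi fun _ : Fin n => μ) (hℓ : Measurable ℓ)
    (hinti : ∀ i : Fin n, Integrable ℓ (jointLaw P i))
    (hintw : Integrable (fun z => ℓ (wstar, z)) μ)
    (hac : ∀ i : Fin n, jointLaw P i ≪ (P.map Prod.fst).prod μ)
    (hIfin : ∀ i : Fin n, Integrable (llr (jointLaw P i) ((P.map Prod.fst).prod μ))
      (jointLaw P i))
    {η c : ℝ} (hmgfInt : Integrable (fun p => exp (-η * excessLoss ℓ wstar p))
      ((P.map Prod.fst).prod μ))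
    (hcentral : log (∫ p, exp (-η * excessLoss ℓ wstar p) ∂((P.map Prod.fst).prod μ)) ≤
      -c * η * excessRisk μ P ℓ wstar) :
    c * η * excessRisk μ P ℓ wstar ≤
      η * empExcess n P ℓ wstar + (1 / (n : ℝ)) * ∑ i, mutInfo μ P i := by
  have : IsProbabilityMeasure (P.map Prod.fst) := Measure.isProbabilityMeasure_map (by fun_prop)
  have hr i := integrable_excessLoss_jointLaw hmarg (hinti i) hintw
  have hcoord i : c * η * excessRisk μ P ℓ wstar ≤
      η * ∫ x, excessLoss ℓ wstar x ∂(jointLaw P i) + mutInfo μ P i :=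
    mul_integral_le_of_log_integral_exp_le (hac i) (hIfin i) (hr i) hmgfInt hcentral
  have hn' : (n : ℝ) ≠ 0 := by positivity
  rw [empExcess_eq_average_integral_jointLaw hℓ hr]
  calc c * η * excessRisk μ P ℓ wstar
      = (1 / (n : ℝ)) * ∑ _i : Fin n, c * η * excessRisk μ P ℓ wstar := by
        rw [Finset.sum_const, Finset.card_univ, Fintype.card_fin, nsmul_eq_mul]
        field_simp
    _ ≤ (1 / (n : ℝ)) * ∑ i, (η * ∫ x, excessLoss ℓ wstar x ∂(jointLaw P i) + mutInfo μ P i) := by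
        gcongr with i
        exact hcoord i
    _ = _ := by rw [Finset.sum_add_distrib, ← Finset.mul_sum]; ring

end

theorem regularized_ERM_bound_general
    (μ : Measure Z) [IsProbabilityMeasure μ] (n : ℕ) (hn : 0 < n)
    (P : Measure (W × (Fin n → Z))) [IsProbabilityMeasure P]
    (hmarg : P.map Prod.snd = Measure.pi fun _ : Fin n => μ)
    (ℓ : W × Z → ℝ) (hℓ : Measurable ℓ) (wstar : W)
    (hinti : ∀ i : Fin n, Integrable ℓ (jointLaw P i))
    (hintw : Integrable (fun z => ℓ (wstar, z)) μ)
    (hac : ∀ i : Fin n, jointLaw P i ≪ (P.map Prod.fst).prod μ)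
    (hIfin : ∀ i : Fin n, Integrable (llr (jointLaw P i) ((P.map Prod.fst).prod μ))
      (jointLaw P i))
    (g : W → ℝ) (hg : Measurable g) (lam0 : ℝ) (hlam0 : 0 ≤ lam0)
    (B : ℝ) (hgB : ∀ w₁ w₂ : W, |g w₁ - g w₂| ≤ B)
    (η c : ℝ) (hη : 0 < η) (hc : 0 < c)
    (hmgfInt : Integrable (fun p => Real.exp (-η * (ℓ p - ℓ (wstar, p.2))))
      ((P.map Prod.fst).prod μ))
    (hcentral :
      Real.log (∫ p, Real.exp (-η * (ℓ p - ℓ (wstar, p.2))) ∂((P.map Prod.fst).prod μ)) ≤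
        -c * η * excessRisk μ P ℓ wstar) :
    excessRisk μ P ℓ wstar ≤
      (1 / c) * (∫ p, (empRisk n ℓ p.1 p.2 - empRisk n ℓ wstar p.2 +
          (lam0 / (n : ℝ)) * (g p.1 - g wstar)) ∂P) +
        lam0 * B / (c * (n : ℝ)) +
        (1 / (c * η * (n : ℝ))) * ∑ i : Fin n, mutInfo μ P i := by
  have hrisk := mul_excessRisk_le_empExcess_add_average_mutInfo hn hmarg hℓ hinti hintw hac hIfin
    hmgfInt hcentral
  have hreg := integral_le_integral_add_mul_add_of_abs_le
    (integrable_empRisk_sub_empRisk fun i => integrable_excessLoss_jointLaw hmarg (hinti i) hintw)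
    (by fun_prop : Measurable fun p : W × (Fin n → Z) => g p.1 - g wstar).aestronglyMeasurable
    (fun p => hgB p.1 wstar) (div_nonneg hlam0 n.cast_nonneg)
  set Ereg := ∫ p, (empRisk n ℓ p.1 p.2 - empRisk n ℓ wstar p.2 +
    (lam0 / (n : ℝ)) * (g p.1 - g wstar)) ∂P
  have hn' : (0 : ℝ) < n := by positivity
  rw [show (1 / c) * Ereg + lam0 * B / (c * n) + 1 / (c * η * n) * ∑ i, mutInfo μ P i =
      (η * (Ereg + lam0 / n * B) + 1 / n * ∑ i, mutInfo μ P i) / (c * η) by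
    field_simp, le_div_iff₀ (by positivity)]
  have := mul_le_mul_of_nonneg_left hreg hη.le
  rw [empExcess] at hrisk
  linarith

theorem regularized_ERM_bound
    (μ : Measure Z) [IsProbabilityMeasure μ] (n : ℕ) (hn : 0 < n)
    (P : Measure (W × (Fin n → Z))) [IsProbabilityMeasure P]
    (hmarg : P.map Prod.snd = Measure.pi fun _ : Fin n => μ)
    (ℓ : W × Z → ℝ) (hℓ : Measurable ℓ) (wstar : W)
    (hint : Integrable ℓ ((P.map Prod.fst).prod μ))
    (hinti : ∀ i : Fin n, Integrable ℓ (jointLaw P i))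
    (hintw : Integrable (fun z => ℓ (wstar, z)) μ)
    (hac : ∀ i : Fin n, jointLaw P i ≪ (P.map Prod.fst).prod μ)
    (hIfin : ∀ i : Fin n, Integrable (llr (jointLaw P i) ((P.map Prod.fst).prod μ))
      (jointLaw P i))
    (g : W → ℝ) (hg : Measurable g) (lam0 : ℝ) (hlam0 : 0 ≤ lam0)
    (B : ℝ) (hB : 0 < B) (hgB : ∀ w₁ w₂ : W, |g w₁ - g w₂| ≤ B)
    (η c : ℝ) (hη : 0 < η) (hc : 0 < c) (hc1 : c ≤ 1)
    (hR : 0 < excessRisk μ P ℓ wstar)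
    (hmgfInt : Integrable (fun p => Real.exp (-η * (ℓ p - ℓ (wstar, p.2))))
      ((P.map Prod.fst).prod μ))
    (hcentral :
      Real.log (∫ p, Real.exp (-η * (ℓ p - ℓ (wstar, p.2))) ∂((P.map Prod.fst).prod μ)) ≤
        -c * η * excessRisk μ P ℓ wstar) :
    excessRisk μ P ℓ wstar ≤
      (1 / c) * (∫ p, (empRisk n ℓ p.1 p.2 - empRisk n ℓ wstar p.2 +
          (lam0 / (n : ℝ)) * (g p.1 - g wstar)) ∂P) +
        lam0 * B / (c * (n : ℝ)) +
        (1 / (c * η * (n : ℝ))) * ∑ i : Fin n, mutInfo μ P i :=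
  regularized_ERM_bound_general μ n hn P hmarg ℓ hℓ wstar hinti hintw hac hIfin g hg lam0 hlam0 B
    hgB η c hη hc hmgfInt hcentral
end
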